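/- Let C be a closed polygonal curve with four vertices p_0, p_1, p_2, p_3 = p_0 in the Euclidean plane forming an isosceles triangle with ‖p_1 − p_0‖ = ‖p_2 − p_0‖ > 0, and suppose the angle θ at p_0 between the vectors p_1 − p_0 and p_2 − p_0 satisfies π/3 < θ < π. Then the limits p*_k = lim_{n→∞} f^n(p_k) exist, p*_0 = p*_3 = p_0, the limit vertices p*_1 and p*_2 lie on the line segment from p_1 to p_2, and p_0, p*_1, p*_2 form a nondegenerate equilateral triangle: ‖p*_1 − p_0‖ = ‖p*_2 − p*_1‖ = ‖p_0 − p*_2‖ > 0. -/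

import Mathlib

open Finset Filter

noncomputable section

/-- The length of the polygonal curve with vertices `p 0, …, p m`
(also the arclength distance from `p 0` to `p m` along the curve). -/
def polyLength {dim : ℕ} (p : ℕ → EuclideanSpace ℝ (Fin dim)) (m : ℕ) : ℝ :=
  ∑ i ∈ Finset.range m, ‖p (i + 1) - p i‖

/-- `P` is the arclength-parameterized linear interpolation of the polygonal
curve with vertices `p 0, …, p m`:
`P ((1-t)·d_{k-1} + t·d_k) = (1-t)·p_{k-1} + t·p_k` for `t ∈ [0,1]`, `k = 1, …, m`,
where `d_k = polyLength p k` is the arclength up to vertex `k`. -/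
def IsArcParam {dim : ℕ} (p : ℕ → EuclideanSpace ℝ (Fin dim)) (m : ℕ)
    (P : ℝ → EuclideanSpace ℝ (Fin dim)) : Prop :=
  ∀ k : ℕ, 1 ≤ k → k ≤ m → ∀ t : ℝ, 0 ≤ t → t ≤ 1 →
    P ((1 - t) * polyLength p (k - 1) + t * polyLength p k)
      = (1 - t) • p (k - 1) + t • p k

/-- The polygonal curve with vertices `p 0, …, p m` is equilateral:
all consecutive interpoint distances agree. -/
def IsEquilateral {dim : ℕ} (p : ℕ → EuclideanSpace ℝ (Fin dim)) (m : ℕ) : Prop :=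
  ∀ k l : ℕ, 1 ≤ k → k ≤ m → 1 ≤ l → l ≤ m →
    ‖p k - p (k - 1)‖ = ‖p l - p (l - 1)‖

/-- `q 0, …, q m` are the vertices of the arclength respacing `f(C)` of the
polygonal curve `C` with vertices `p 0, …, p m`:
`q k = P (k·L(C)/m)` where `P` is the arclength parameterization of `C`;
by convention `f(C) := C` when `L(C) = 0`. -/
def Respaces {dim : ℕ} (m : ℕ) (p q : ℕ → EuclideanSpace ℝ (Fin dim)) : Prop :=
  (polyLength p m = 0 ∧ ∀ k ≤ m, q k = p k) ∨
  (0 < polyLength p m ∧ ∃ P : ℝ → EuclideanSpace ℝ (Fin dim), IsArcParam p m P ∧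
    ∀ k ≤ m, q k = P ((k : ℝ) * polyLength p m / m))
/-!
An isosceles triangle stays isosceles under respacing, with the same apex and the same axis of
symmetry. If `h` is its height and `b` its base, each leg has length `a = √(h² + b²/4)`, and when
`a ≤ b` (apex angle at least `π/3`) the two respaced vertices at arclength `L/3` and `2L/3` land
on the base, symmetrically, at distance `(2a + b)/3` apart. So respacing acts on the base alone by
`b ↦ (2√(h² + b²/4) + b)/3`, which contracts with ratio `2/3` towards the base `2h/√3` of the
equilateral triangle of height `h`.
-/

open Set InnerProductGeometry

section BaseSequence

def baseStep (h b : ℝ) : ℝ := (2 * √(h ^ 2 + b ^ 2 / 4) + b) / 3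

def equilateralBase (h : ℝ) : ℝ := 2 * h / √3

variable {h b : ℝ}

lemma equilateralBase_nonneg (hh : 0 ≤ h) : 0 ≤ equilateralBase h := by
  unfold equilateralBase; positivity

lemma equilateralBase_pos (hh : 0 < h) : 0 < equilateralBase h := by
  unfold equilateralBase; positivity

lemma equilateralBase_sq (h : ℝ) : equilateralBase h ^ 2 = 4 * h ^ 2 / 3 := by
  rw [equilateralBase, div_pow, Real.sq_sqrt (by norm_num)]
  ring

lemma sqrt_sq_add_equilateralBase_sq (hh : 0 ≤ h) :
    √(h ^ 2 + equilateralBase h ^ 2 / 4) = equilateralBase h := by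
  rw [Real.sqrt_eq_iff_eq_sq (by positivity) (equilateralBase_nonneg hh), equilateralBase_sq]
  ring

lemma equilateralBase_le_iff (hh : 0 ≤ h) (hb : 0 ≤ b) :
    equilateralBase h ≤ b ↔ √(h ^ 2 + b ^ 2 / 4) ≤ b := by
  rw [Real.sqrt_le_left hb, ← pow_le_pow_iff_left₀ (equilateralBase_nonneg hh) hb two_ne_zero,
    equilateralBase_sq]
  constructor <;> intro <;> linarith

lemma mapsTo_baseStep (hh : 0 ≤ h) :
    MapsTo (baseStep h) (Ici (equilateralBase h)) (Ici (equilateralBase h)) := by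
  intro b (hb : equilateralBase h ≤ b)
  have hleg : equilateralBase h ≤ √(h ^ 2 + b ^ 2 / 4) := by
    rw [← sqrt_sq_add_equilateralBase_sq hh]
    gcongr
    exact equilateralBase_nonneg hh
  show equilateralBase h ≤ baseStep h b
  unfold baseStep
  linarith

lemma baseStep_sub_equilateralBase_le (hh : 0 ≤ h) (hb : equilateralBase h ≤ b) :
    baseStep h b - equilateralBase h ≤ 2 / 3 * (b - equilateralBase h) := by
  have hB := equilateralBase_nonneg hh
  -- `h² = 3B²/4` gives `h² + b²/4 ≤ ((b + B)/2)²` exactly when `B ≤ b`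
  have hleg : √(h ^ 2 + b ^ 2 / 4) ≤ (b + equilateralBase h) / 2 := by
    rw [Real.sqrt_le_left (by linarith)]
    nlinarith [equilateralBase_sq h]
  unfold baseStep
  linarith

lemma tendsto_iterate_baseStep (hh : 0 ≤ h) (hb : equilateralBase h ≤ b) :
    Tendsto (fun n ↦ (baseStep h)^[n] b) atTop (nhds (equilateralBase h)) := by
  set B := equilateralBase h
  have hge (n : ℕ) : B ≤ (baseStep h)^[n] b := (mapsTo_baseStep hh).iterate n hb
  have hbound (n : ℕ) : (baseStep h)^[n] b - B ≤ (2 / 3) ^ n * (b - B) := by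
    induction n with
    | zero => simp
    | succ n ih =>
      rw [Function.iterate_succ_apply', pow_succ']
      calc baseStep h ((baseStep h)^[n] b) - B ≤ 2 / 3 * ((baseStep h)^[n] b - B) :=
            baseStep_sub_equilateralBase_le hh (hge n)
        _ ≤ 2 / 3 * ((2 / 3) ^ n * (b - B)) := by gcongr
        _ = 2 / 3 * (2 / 3) ^ n * (b - B) := by ring
  have hgeom : Tendsto (fun n : ℕ ↦ (2 / 3 : ℝ) ^ n * (b - B)) atTop (nhds 0) := by
    simpa using (tendsto_pow_atTop_nhds_zero_of_lt_one (by norm_num : (0 : ℝ) ≤ 2 / 3)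
      (by norm_num)).mul_const (b - B)
  have hsub := squeeze_zero (fun n ↦ sub_nonneg.mpr (hge n)) hbound hgeom
  simpa using hsub.add_const B

end BaseSequence

section ArcParam

variable {dim m j k : ℕ} {p : ℕ → EuclideanSpace ℝ (Fin dim)} {P : ℝ → EuclideanSpace ℝ (Fin dim)}

@[simp] lemma polyLength_zero : polyLength p 0 = 0 := by
  simp [polyLength]

lemma polyLength_succ : polyLength p (j + 1) = polyLength p j + ‖p (j + 1) - p j‖ :=
  Finset.sum_range_succ _ _

namespace IsArcParam

lemma apply_zero (hP : IsArcParam p m P) (hm : 1 ≤ m) : P 0 = p 0 := by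
  simpa using hP 1 le_rfl hm 0 le_rfl zero_le_one

lemma apply_polyLength (hP : IsArcParam p m P) (hk : 1 ≤ k) (hkm : k ≤ m) :
    P (polyLength p k) = p k := by
  simpa using hP k hk hkm 1 zero_le_one le_rfl

lemma apply_of_mem_Icc (hP : IsArcParam p m P) (hj : j + 1 ≤ m) {s : ℝ}
    (hs : s ∈ Icc (polyLength p j) (polyLength p (j + 1))) :
    P s = p j + ((s - polyLength p j) / ‖p (j + 1) - p j‖) • (p (j + 1) - p j) := by
  have hP' := hP (j + 1) (by omega) hj
  simp only [add_tsub_cancel_right] at hP'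
  rw [polyLength_succ] at hs hP'
  set ℓ := ‖p (j + 1) - p j‖
  rcases (norm_nonneg (p (j + 1) - p j) : 0 ≤ ℓ).eq_or_lt with hℓ | hℓ
  · have hsj : s = polyLength p j := by linarith [hs.1, hs.2]
    have hpj : p (j + 1) - p j = 0 := norm_eq_zero.mp hℓ.symm
    simpa [hsj, hpj] using hP' 0 le_rfl zero_le_one
  · set t := (s - polyLength p j) / ℓ
    have ht : s = (1 - t) * polyLength p j + t * (polyLength p j + ℓ) := by
      have hℓ0 : ℓ ≠ 0 := hℓ.ne'
      simp only [t]
      field_simp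
      ring
    have ht0 : 0 ≤ t := div_nonneg (by linarith [hs.1]) hℓ.le
    have ht1 : t ≤ 1 := (div_le_one hℓ).mpr (by linarith [hs.2])
    rw [ht, hP' t ht0 ht1]
    module

end IsArcParam

end ArcParam

section IsoTriangle

variable {E : Type*} [NormedAddCommGroup E] [InnerProductSpace ℝ E] {M v w : E} {b : ℝ}

/-- `M` is the midpoint of the base, `v` its unit direction and `w` the height vector; the
indices from `3` on repeat the apex, which closes the curve. -/
def isoTriangle (M v w : E) (b : ℝ) : ℕ → E
  | 1 => M - (b / 2) • v
  | 2 => M + (b / 2) • v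
  | _ => M + w

@[simp] lemma isoTriangle_zero : isoTriangle M v w b 0 = M + w := rfl
@[simp] lemma isoTriangle_one : isoTriangle M v w b 1 = M - (b / 2) • v := rfl
@[simp] lemma isoTriangle_two : isoTriangle M v w b 2 = M + (b / 2) • v := rfl

lemma continuous_isoTriangle (M v w : E) (k : ℕ) : Continuous fun b ↦ isoTriangle M v w b k := by
  match k with
  | 1 | 2 => simp only [isoTriangle]; fun_prop
  | 0 | n + 3 => exact continuous_const

lemma norm_smul_sub_of_inner_eq_zero (hv : ‖v‖ = 1) (hvw : inner ℝ v w = 0) (s : ℝ) :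
    ‖s • v - w‖ = √(‖w‖ ^ 2 + s ^ 2) := by
  have h := norm_sub_sq_eq_norm_sq_add_norm_sq_real
    (by rw [real_inner_smul_left, hvw, mul_zero] : inner ℝ (s • v) w = 0)
  rw [norm_smul, hv, Real.norm_eq_abs, mul_one] at h
  rw [eq_comm, Real.sqrt_eq_iff_mul_self_eq (by positivity) (norm_nonneg _), h, ← sq_abs s]
  ring

lemma norm_isoTriangle_one_sub_zero (hv : ‖v‖ = 1) (hvw : inner ℝ v w = 0) :
    ‖isoTriangle M v w b 1 - isoTriangle M v w b 0‖ = √(‖w‖ ^ 2 + b ^ 2 / 4) := by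
  rw [isoTriangle_one, isoTriangle_zero, show M - (b / 2) • v - (M + w) = (-(b / 2)) • v - w by
    module, norm_smul_sub_of_inner_eq_zero hv hvw]
  ring_nf

lemma norm_isoTriangle_two_sub_one (hv : ‖v‖ = 1) :
    ‖isoTriangle M v w b 2 - isoTriangle M v w b 1‖ = |b| := by
  rw [isoTriangle_two, isoTriangle_one, show M + (b / 2) • v - (M - (b / 2) • v) = b • v by
    module, norm_smul, hv, Real.norm_eq_abs, mul_one]

lemma norm_isoTriangle_zero_sub_two (hv : ‖v‖ = 1) (hvw : inner ℝ v w = 0) :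
    ‖isoTriangle M v w b 0 - isoTriangle M v w b 2‖ = √(‖w‖ ^ 2 + b ^ 2 / 4) := by
  rw [isoTriangle_zero, isoTriangle_two, show M + w - (M + (b / 2) • v) = -((b / 2) • v - w) by
    module, norm_neg, norm_smul_sub_of_inner_eq_zero hv hvw]
  ring_nf

lemma add_smul_mem_segment {s r : ℝ} (hs : |s| ≤ r) :
    M + s • v ∈ segment ℝ (M - r • v) (M + r • v) := by
  have h := image_segment ℝ (AffineMap.lineMap M (M + v)) (-r) r
  simp only [AffineMap.lineMap_apply_module', add_sub_cancel_left, neg_smul,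
    segment_eq_Icc (neg_le_self ((abs_nonneg s).trans hs))] at h
  rw [sub_eq_add_neg, add_comm M, add_comm M (r • v), ← h]
  exact ⟨s, abs_le.mp hs, by simp [AffineMap.lineMap_apply_module', add_comm]⟩

lemma isoTriangle_one_mem_segment {b' : ℝ} (hb' : |b'| ≤ b) :
    isoTriangle M v w b' 1 ∈ segment ℝ (isoTriangle M v w b 1) (isoTriangle M v w b 2) := by
  have h := add_smul_mem_segment (M := M) (v := v) (s := -(b' / 2)) (r := b / 2)
    (by rw [abs_neg, abs_div, abs_two]; linarith)
  rwa [neg_smul, ← sub_eq_add_neg] at h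

lemma isoTriangle_two_mem_segment {b' : ℝ} (hb' : |b'| ≤ b) :
    isoTriangle M v w b' 2 ∈ segment ℝ (isoTriangle M v w b 1) (isoTriangle M v w b 2) :=
  add_smul_mem_segment (by rw [abs_div, abs_two]; linarith)

lemma exists_isoTriangle {p₀ p₁ p₂ : E} (hiso : ‖p₁ - p₀‖ = ‖p₂ - p₀‖) (hne : p₁ ≠ p₂) :
    ∃ M v w : E, ‖v‖ = 1 ∧ inner ℝ v w = 0 ∧ p₀ = isoTriangle M v w ‖p₂ - p₁‖ 0 ∧
      p₁ = isoTriangle M v w ‖p₂ - p₁‖ 1 ∧ p₂ = isoTriangle M v w ‖p₂ - p₁‖ 2 := by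
  have hb : ‖p₂ - p₁‖ ≠ 0 := norm_ne_zero_iff.mpr (sub_ne_zero.mpr hne.symm)
  have hbv : ‖p₂ - p₁‖ • ‖p₂ - p₁‖⁻¹ • (p₂ - p₁) = p₂ - p₁ := smul_inv_smul₀ hb _
  refine ⟨(2⁻¹ : ℝ) • (p₁ + p₂), ‖p₂ - p₁‖⁻¹ • (p₂ - p₁), p₀ - (2⁻¹ : ℝ) • (p₁ + p₂),
    by simp [norm_smul, hb], ?_, by simp, ?_, ?_⟩
  · have h := (real_inner_add_sub_eq_zero_iff (p₂ - p₀) (p₁ - p₀)).mpr hiso.symm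
    rw [real_inner_smul_left, mul_eq_zero, real_inner_comm]
    right
    rw [show p₀ - (2⁻¹ : ℝ) • (p₁ + p₂) = (-2⁻¹ : ℝ) • (p₂ - p₀ + (p₁ - p₀)) by module,
      real_inner_smul_left, show p₂ - p₁ = p₂ - p₀ - (p₁ - p₀) by abel, h, mul_zero]
  · rw [isoTriangle_one, div_eq_inv_mul, ← smul_smul, hbv]
    module
  · rw [isoTriangle_two, div_eq_inv_mul, ← smul_smul, hbv]
    module

lemma norm_le_norm_sub_of_pi_div_three_le_angle {x y : E} (hxy : ‖x‖ = ‖y‖)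
    (hangle : Real.pi / 3 ≤ angle x y) : ‖x‖ ≤ ‖x - y‖ := by
  have hlaw := norm_sub_sq_eq_norm_sq_add_norm_sq_sub_two_mul_norm_mul_norm_mul_cos_angle x y
  have hcos : Real.cos (angle x y) ≤ 1 / 2 := by
    rw [← Real.cos_pi_div_three]
    exact Real.cos_le_cos_of_nonneg_of_le_pi (by positivity) (angle_le_pi x y) hangle
  rw [← hxy] at hlaw
  rw [← abs_norm x, ← abs_norm (x - y), ← sq_le_sq, sq, sq, hlaw]
  nlinarith [mul_self_nonneg ‖x‖]

lemma add_ne_zero_of_angle_lt_pi {x y : E} (hx : x ≠ 0) (hangle : angle x y < Real.pi) :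
    x + y ≠ 0 := by
  intro hxy
  rw [eq_neg_of_add_eq_zero_right hxy, angle_self_neg_of_nonzero hx] at hangle
  exact lt_irrefl _ hangle

lemma exists_isoTriangle_of_angle {p₀ p₁ p₂ : E} (hiso : ‖p₁ - p₀‖ = ‖p₂ - p₀‖)
    (hpos : 0 < ‖p₁ - p₀‖) (hangle1 : Real.pi / 3 < EuclideanGeometry.angle p₁ p₀ p₂)
    (hangle2 : EuclideanGeometry.angle p₁ p₀ p₂ < Real.pi) :
    ∃ M v w : E, ∃ b : ℝ, ‖v‖ = 1 ∧ inner ℝ v w = 0 ∧ 0 < ‖w‖ ∧ equilateralBase ‖w‖ ≤ b ∧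
      p₀ = isoTriangle M v w b 0 ∧ p₁ = isoTriangle M v w b 1 ∧ p₂ = isoTriangle M v w b 2 := by
  have hleg : ‖p₁ - p₀‖ ≤ ‖p₂ - p₁‖ := by
    have := norm_le_norm_sub_of_pi_div_three_le_angle hiso hangle1.le
    rwa [sub_sub_sub_cancel_right, norm_sub_rev p₁ p₂] at this
  have hne : p₁ ≠ p₂ := by
    rintro rfl
    rw [sub_self, norm_zero] at hleg
    linarith
  obtain ⟨M, v, w, hv, hvw, h₀, h₁, h₂⟩ := exists_isoTriangle hiso hne
  generalize ‖p₂ - p₁‖ = b at h₀ h₁ h₂ hleg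
  have hw : w ≠ 0 := by
    intro hw
    refine add_ne_zero_of_angle_lt_pi (norm_pos_iff.mp hpos) hangle2 ?_
    rw [h₀, h₁, h₂, hw, isoTriangle_zero, isoTriangle_one, isoTriangle_two, vsub_eq_sub]
    module
  refine ⟨M, v, w, b, hv, hvw, norm_pos_iff.mpr hw,
    (equilateralBase_le_iff (norm_nonneg w) ((norm_nonneg _).trans hleg)).mpr ?_, h₀, h₁, h₂⟩
  rwa [← norm_isoTriangle_one_sub_zero (M := M) hv hvw, ← h₁, ← h₀]

end IsoTriangle

section Respacing

variable {dim : ℕ} {M v w : EuclideanSpace ℝ (Fin dim)} {b : ℝ}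
  {p : ℕ → EuclideanSpace ℝ (Fin dim)}

lemma polyLength_of_eq_isoTriangle (hv : ‖v‖ = 1) (hvw : inner ℝ v w = 0) (hb : 0 ≤ b)
    (hp : ∀ k ≤ 3, p k = isoTriangle M v w b k) :
    polyLength p 1 = √(‖w‖ ^ 2 + b ^ 2 / 4) ∧ polyLength p 2 = √(‖w‖ ^ 2 + b ^ 2 / 4) + b ∧
      polyLength p 3 = 2 * √(‖w‖ ^ 2 + b ^ 2 / 4) + b := by
  have hL1 : polyLength p 1 = √(‖w‖ ^ 2 + b ^ 2 / 4) := by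
    rw [polyLength_succ, polyLength_zero, zero_add, hp 1 (by norm_num), hp 0 (by norm_num),
      norm_isoTriangle_one_sub_zero hv hvw]
  have hL2 : polyLength p 2 = √(‖w‖ ^ 2 + b ^ 2 / 4) + b := by
    rw [polyLength_succ, hL1, hp 2 (by norm_num), hp 1 (by norm_num),
      norm_isoTriangle_two_sub_one hv, abs_of_nonneg hb]
  refine ⟨hL1, hL2, ?_⟩
  rw [polyLength_succ, hL2, hp 3 le_rfl, hp 2 (by norm_num),
    show isoTriangle M v w b 3 = isoTriangle M v w b 0 from rfl,
    norm_isoTriangle_zero_sub_two hv hvw]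
  ring

lemma IsArcParam.apply_of_eq_isoTriangle {P : ℝ → EuclideanSpace ℝ (Fin dim)}
    (hP : IsArcParam p 3 P) (hv : ‖v‖ = 1) (hvw : inner ℝ v w = 0) (hb : 0 < b)
    (hp : ∀ k ≤ 3, p k = isoTriangle M v w b k) {s : ℝ}
    (hs : s ∈ Icc (√(‖w‖ ^ 2 + b ^ 2 / 4)) (√(‖w‖ ^ 2 + b ^ 2 / 4) + b)) :
    P s = M + (s - (√(‖w‖ ^ 2 + b ^ 2 / 4) + b / 2)) • v := by
  obtain ⟨hL1, hL2, -⟩ := polyLength_of_eq_isoTriangle hv hvw hb.le hp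
  rw [hP.apply_of_mem_Icc (j := 1) (by norm_num) (by norm_num [hL1, hL2]; exact hs), hL1,
    show 1 + 1 = 2 from rfl, hp 1 (by norm_num), hp 2 (by norm_num),
    norm_isoTriangle_two_sub_one hv, abs_of_pos hb, isoTriangle_one, isoTriangle_two]
  match_scalars <;> field_simp <;> ring

lemma Respaces.eq_isoTriangle_baseStep {q : ℕ → EuclideanSpace ℝ (Fin dim)}
    (hq : Respaces 3 p q) (hv : ‖v‖ = 1) (hvw : inner ℝ v w = 0)
    (hb : equilateralBase ‖w‖ ≤ b) (hp : ∀ k ≤ 3, p k = isoTriangle M v w b k) :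
    ∀ k ≤ 3, q k = isoTriangle M v w (baseStep ‖w‖ b) k := by
  have hb0 : 0 ≤ b := (equilateralBase_nonneg (norm_nonneg w)).trans hb
  have hab := (equilateralBase_le_iff (norm_nonneg w) hb0).mp hb
  obtain ⟨-, -, hL3⟩ := polyLength_of_eq_isoTriangle hv hvw hb0 hp
  have hstep : baseStep ‖w‖ b = (2 * √(‖w‖ ^ 2 + b ^ 2 / 4) + b) / 3 := rfl
  set a := √(‖w‖ ^ 2 + b ^ 2 / 4)
  have ha : 0 ≤ a := Real.sqrt_nonneg _
  rcases hq with ⟨hL, hqp⟩ | ⟨hL, P, hP, hqP⟩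
  · -- `L = 2a + b = 0` forces `a = b = 0`
    have hfix : baseStep ‖w‖ b = b := by linarith
    intro k hk
    rw [hfix, hqp k hk, hp k hk]
  · have hbpos : 0 < b := by linarith
    have hq (k : ℕ) (hk : k ≤ 3) : q k = P (k * (2 * a + b) / 3) := by
      rw [hqP k hk, hL3]
      norm_num
    intro k hk
    interval_cases k
    · rw [hq 0 (by norm_num), Nat.cast_zero, zero_mul, zero_div, hP.apply_zero (by norm_num),
        hp 0 (by norm_num)]
      rfl
    · rw [hq 1 (by norm_num), hP.apply_of_eq_isoTriangle hv hvw hbpos hp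
        (by constructor <;> linarith), isoTriangle_one, hstep]
      module
    · rw [hq 2 (by norm_num), hP.apply_of_eq_isoTriangle hv hvw hbpos hp
        (by constructor <;> linarith), isoTriangle_two, hstep]
      module
    · rw [hq 3 le_rfl, Nat.cast_ofNat, mul_div_cancel_left₀ _ three_ne_zero, ← hL3,
        hP.apply_polyLength (by norm_num) le_rfl, hp 3 le_rfl]
      rfl

end Respacing

/-- For an isosceles triangle, viewed as a closed polygonal curve, with apex
angle `θ` at `p 0` satisfying `π/3 < θ < π`, the iterated arclength respacings
converge to a nondegenerate equilateral triangle with `p 0` fixed and the other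
two limit vertices on the segment from `p 1` to `p 2`. -/
theorem stmt18 (p : ℕ → EuclideanSpace ℝ (Fin 2))
    (hclosed : p 3 = p 0)
    (hiso : ‖p 1 - p 0‖ = ‖p 2 - p 0‖) (hpos : 0 < ‖p 1 - p 0‖)
    (hangle1 : Real.pi / 3 < EuclideanGeometry.angle (p 1) (p 0) (p 2))
    (hangle2 : EuclideanGeometry.angle (p 1) (p 0) (p 2) < Real.pi)
    (c : ℕ → ℕ → EuclideanSpace ℝ (Fin 2))
    (hc0 : ∀ k ≤ 3, c 0 k = p k)
    (hstep : ∀ n, Respaces 3 (c n) (c (n + 1))) :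
    ∃ q : ℕ → EuclideanSpace ℝ (Fin 2),
      (∀ k ≤ 3, Tendsto (fun n => c n k) atTop (nhds (q k))) ∧
      q 0 = p 0 ∧ q 3 = p 0 ∧
      q 1 ∈ segment ℝ (p 1) (p 2) ∧ q 2 ∈ segment ℝ (p 1) (p 2) ∧
      ‖q 1 - p 0‖ = ‖q 2 - q 1‖ ∧ ‖q 2 - q 1‖ = ‖p 0 - q 2‖ ∧
      0 < ‖q 1 - p 0‖ := by
  obtain ⟨M, v, w, b, hv, hvw, hw, hb, h₀, h₁, h₂⟩ :=
    exists_isoTriangle_of_angle hiso hpos hangle1 hangle2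
  set T := isoTriangle M v w
  set B := equilateralBase ‖w‖
  have hc (n : ℕ) : ∀ k ≤ 3, c n k = T ((baseStep ‖w‖)^[n] b) k := by
    induction n with
    | zero =>
      intro k hk
      rw [hc0 k hk]
      interval_cases k <;> simp only [hclosed, h₀, h₁, h₂] <;> rfl
    | succ n ih =>
      rw [Function.iterate_succ_apply']
      exact (hstep n).eq_isoTriangle_baseStep hv hvw ((mapsTo_baseStep hw.le).iterate n hb) ih
  have hp₀ : p 0 = T B 0 := h₀
  have hleg : √(‖w‖ ^ 2 + B ^ 2 / 4) = B := sqrt_sq_add_equilateralBase_sq (norm_nonneg w)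
  have hB : 0 < B := equilateralBase_pos hw
  refine ⟨T B, fun k hk ↦ ?_, hp₀.symm, hp₀.symm, ?_, ?_, ?_, ?_, ?_⟩
  · exact (((continuous_isoTriangle M v w k).tendsto B).comp
      (tendsto_iterate_baseStep hw.le hb)).congr fun n ↦ (hc n k hk).symm
  · rw [h₁, h₂]
    exact isoTriangle_one_mem_segment ((abs_of_pos hB).trans_le hb)
  · rw [h₁, h₂]
    exact isoTriangle_two_mem_segment ((abs_of_pos hB).trans_le hb)
  · rw [hp₀, norm_isoTriangle_one_sub_zero hv hvw, norm_isoTriangle_two_sub_one hv, hleg,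
      abs_of_pos hB]
  · rw [hp₀, norm_isoTriangle_zero_sub_two hv hvw, norm_isoTriangle_two_sub_one hv, hleg,
      abs_of_pos hB]
  · rw [hp₀, norm_isoTriangle_one_sub_zero hv hvw, hleg]
    exact hB
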